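/- For every morphism g : Σ* → Σ* and every subset Γ ⊆ Σ, there exists a natural number r > 0 such that g^r respects Γ, meaning every letter of Σ is dead, near dead, resilient, or resurrecting with respect to g^r and Γ. -/
import Mathlib


/-- The word map of a morphism `g : S → S*`. -/
def wordMap {S : Type*} (g : S → List S) : List S → List S :=
  fun l => l.flatMap g

/-- `b` is dead w.r.t. the morphism `f` and the set `Γ`: `f^n(b) ∈ Γ*` for all `n`. -/
def DeadLetter {S : Type*} (f : S → List S) (Γ : Finset S) (b : S) : Prop :=
  ∀ n : ℕ, ∀ c ∈ (wordMap f)^[n] [b], c ∈ Γ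

/-- `b` is near dead w.r.t. `f` and `Γ`. -/
def NearDead {S : Type*} (f : S → List S) (Γ : Finset S) (b : S) : Prop :=
  b ∉ Γ ∧ ∀ n : ℕ, 0 < n → ∀ c ∈ (wordMap f)^[n] [b], DeadLetter f Γ c

/-- `b` is resilient w.r.t. `f` and `Γ`: `f^n(b) ∉ Γ*` for all `n`. -/
def Resilient {S : Type*} (f : S → List S) (Γ : Finset S) (b : S) : Prop :=
  ∀ n : ℕ, ∃ c ∈ (wordMap f)^[n] [b], c ∉ Γ

/-- `b` is resurrecting w.r.t. `f` and `Γ`. -/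
def Resurrecting {S : Type*} (f : S → List S) (Γ : Finset S) (b : S) : Prop :=
  b ∈ Γ ∧ ∀ n : ℕ, 0 < n → ∃ c ∈ (wordMap f)^[n] [b], c ∉ Γ

section helpers

variable {S : Type*}

lemma wm_nil (g : S → List S) (n : ℕ) : (wordMap g)^[n] ([] : List S) = [] := by
  induction n with
  | zero => rfl
  | succ n ih => rw [Function.iterate_succ_apply', ih]; rfl

lemma wm_append (g : S → List S) (n : ℕ) (l₁ l₂ : List S) :
    (wordMap g)^[n] (l₁ ++ l₂) = (wordMap g)^[n] l₁ ++ (wordMap g)^[n] l₂ := by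
  induction n generalizing l₁ l₂ with
  | zero => rfl
  | succ n ih =>
    rw [Function.iterate_succ_apply, Function.iterate_succ_apply,
      Function.iterate_succ_apply]
    rw [show wordMap g (l₁ ++ l₂) = wordMap g l₁ ++ wordMap g l₂ by
      simp [wordMap], ih]

lemma wm_flatMap (g : S → List S) (n : ℕ) (l : List S) :
    (wordMap g)^[n] l = l.flatMap (fun c => (wordMap g)^[n] [c]) := by
  induction l with
  | nil => simp [wm_nil]
  | cons a l ih =>
    have h := wm_append g n [a] l
    simp only [List.singleton_append] at h
    rw [h, ih, List.flatMap_cons]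

lemma wm_comp (g : S → List S) (r : ℕ) :
    wordMap (fun c => (wordMap g)^[r] [c]) = (wordMap g)^[r] := by
  funext l
  rw [wm_flatMap]
  rfl

lemma wm_comp_iter (g : S → List S) (r n : ℕ) :
    (wordMap (fun c => (wordMap g)^[r] [c]))^[n] = (wordMap g)^[r * n] := by
  rw [wm_comp, Function.iterate_mul]

variable [Fintype S] [DecidableEq S]

/-- `F Γ = { b : g(b) ∈ Γ* }`. -/
def Fset (g : S → List S) (A : Finset S) : Finset S :=
  Finset.univ.filter (fun b => ∀ c ∈ g b, c ∈ A)

lemma mem_iter_Fset (g : S → List S) (Γ : Finset S) (n : ℕ) (b : S) :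
    b ∈ (Fset g)^[n] Γ ↔ ∀ c ∈ (wordMap g)^[n] [b], c ∈ Γ := by
  induction n generalizing b with
  | zero => simp
  | succ n ih =>
    rw [Function.iterate_succ_apply']
    have hmem : ∀ A : Finset S, b ∈ Fset g A ↔ ∀ c ∈ g b, c ∈ A := by
      intro A; simp [Fset]
    rw [hmem]
    have hword : (wordMap g)^[n + 1] [b]
        = (g b).flatMap (fun c => (wordMap g)^[n] [c]) := by
      rw [Function.iterate_succ_apply, ← wm_flatMap]
      congr 1
      simp [wordMap]
    rw [hword]
    constructor
    · intro h c hc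
      rw [List.mem_flatMap] at hc
      obtain ⟨d, hd, hcd⟩ := hc
      exact (ih d).mp (h d hd) c hcd
    · intro h d hd
      rw [ih]
      intro c hc
      exact h c (List.mem_flatMap.mpr ⟨d, hd, hc⟩)

end helpers

/-- For every morphism `g` over a finite alphabet and every `Γ`, there is `r > 0`
such that `g^r` respects `Γ`: every letter is dead, near dead, resilient, or
resurrecting with respect to `g^r` and `Γ`. -/
theorem stmt15 {S : Type*} [Fintype S] [DecidableEq S] (g : S → List S) (Γ : Finset S) :
    ∃ r : ℕ, 0 < r ∧ ∀ b : S,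
      DeadLetter (fun c => (wordMap g)^[r] [c]) Γ b ∨
      NearDead (fun c => (wordMap g)^[r] [c]) Γ b ∨
      Resilient (fun c => (wordMap g)^[r] [c]) Γ b ∨
      Resurrecting (fun c => (wordMap g)^[r] [c]) Γ b := by
  classical
  set A : ℕ → Finset S := fun n => (Fset g)^[n] Γ with hA
  -- eventually periodic
  obtain ⟨m, m', hne, heq⟩ := Finite.exists_ne_map_eq_of_infinite A
  -- wlog i < j
  obtain ⟨i, j, hij, hAij⟩ : ∃ i j : ℕ, i < j ∧ A i = A j := by
    rcases lt_or_gt_of_ne hne with h | h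
    · exact ⟨m, m', h, heq⟩
    · exact ⟨m', m, h, heq.symm⟩
  set p := j - i with hp
  have hp0 : 0 < p := Nat.sub_pos_of_lt hij
  have hstep : ∀ m ≥ i, A (m + p) = A m := by
    intro m hm
    have h1 : A m = (Fset g)^[m - i] (A i) := by
      rw [hA]
      simp only
      rw [← Function.iterate_add_apply]
      congr 1
      omega
    have h2 : A (m + p) = (Fset g)^[m - i] (A (i + p)) := by
      rw [hA]
      simp only
      rw [← Function.iterate_add_apply]
      congr 1
      omega
    rw [h2, show i + p = j by omega, ← hAij, ← h1]
  have hmul : ∀ k : ℕ, ∀ m ≥ i, A (m + k * p) = A m := by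
    intro k
    induction k with
    | zero => simp
    | succ k ih =>
      intro m hm
      have : m + (k + 1) * p = (m + k * p) + p := by ring
      rw [this, hstep _ (by omega), ih m hm]
  set r := p * (i + 1) with hr
  have hr0 : 0 < r := by positivity
  have hri : i < r := by
    calc i < i + 1 := Nat.lt_succ_self i
    _ ≤ p * (i + 1) := Nat.le_mul_of_pos_left _ hp0
  have hAr : ∀ n : ℕ, 1 ≤ n → A (r * n) = A r := by
    intro n hn
    have h1 : r * n = r + ((i + 1) * (n - 1)) * p := by
      cases n with
      | zero => omega
      | succ n => simp [hr]; ring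
    rw [h1, hmul _ r (le_of_lt hri)]
  -- translate membership
  set f : S → List S := fun c => (wordMap g)^[r] [c] with hf
  have hiter : ∀ n : ℕ, (wordMap f)^[n] = (wordMap g)^[r * n] := fun n =>
    wm_comp_iter g r n
  have hD : ∀ (n : ℕ) (b : S), b ∈ A n ↔ ∀ c ∈ (wordMap g)^[n] [b], c ∈ Γ :=
    fun n b => mem_iter_Fset g Γ n b
  -- membership of images in D := A r
  have hchild : ∀ (b : S), b ∈ A r → ∀ n ≥ 1, ∀ c ∈ (wordMap g)^[r * n] [b],
      c ∈ Γ ∧ c ∈ A r := by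
    intro b hb n hn c hc
    constructor
    · have hb' : b ∈ A (r * n) := by rw [hAr n hn]; exact hb
      exact (hD _ b).mp hb' c hc
    · rw [hD]
      intro e he
      have hb' : b ∈ A (r * (n + 1)) := by rw [hAr (n + 1) (by omega)]; exact hb
      have := (hD _ b).mp hb'
      apply this e
      have : (wordMap g)^[r * (n + 1)] [b] = (wordMap g)^[r] ((wordMap g)^[r * n] [b]) := by
        rw [← Function.iterate_add_apply]
        congr 1
        ring
      rw [this, wm_flatMap]
      exact List.mem_flatMap.mpr ⟨c, hc, he⟩
  -- dead letters
  have hdead : ∀ b : S, b ∈ Γ → b ∈ A r → DeadLetter f Γ b := by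
    intro b hbΓ hbA n
    rw [hiter]
    cases n with
    | zero => simpa using hbΓ
    | succ n =>
      intro c hc
      exact ((hchild b hbA (n + 1) (by omega)) c hc).1
  refine ⟨r, hr0, fun b => ?_⟩
  by_cases hbA : b ∈ A r
  · by_cases hbΓ : b ∈ Γ
    · exact Or.inl (hdead b hbΓ hbA)
    · refine Or.inr (Or.inl ⟨hbΓ, fun n hn c hc => ?_⟩)
      rw [hiter] at hc
      obtain ⟨hcΓ, hcA⟩ := hchild b hbA n hn c hc
      exact hdead c hcΓ hcA
  · by_cases hbΓ : b ∈ Γ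
    · refine Or.inr (Or.inr (Or.inr ⟨hbΓ, fun n hn => ?_⟩))
      rw [hiter]
      have hb' : b ∉ A (r * n) := by rw [hAr n hn]; exact hbA
      rw [hD] at hb'
      push_neg at hb'
      exact hb'
    · refine Or.inr (Or.inr (Or.inl (fun n => ?_)))
      rw [hiter]
      cases n with
      | zero => exact ⟨b, by simp, hbΓ⟩
      | succ n =>
        have hb' : b ∉ A (r * (n + 1)) := by rw [hAr (n + 1) (by omega)]; exact hbA
        rw [hD] at hb'
        push_neg at hb'
        exact hb'
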